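/- arXiv:1701.06630 — 2 statements merged into one kernel-verified Lean document; each statement's English description precedes it below -/
import Mathlib

section
/- Let Φ be a barrelled nuclear space and let {L_t}_{t≥0} be a cylindrical process in Φ'. Suppose that for every t ≥ 0 the cylindrical distribution of L_t extends to a Radon probability measure μ_{L_t} on Φ'_β, and for every T > 0 the family {μ_{L_t} : t ∈ [0,T]} is uniformly tight. Then for every T > 0 the family of linear maps {L_t : t ∈ [0,T]} from Φ into L⁰(Ω,F,P) is equicontinuous. -/
/-!
Given `T` and `ε`, uniform tightness yields a compact `K ⊆ Φ'_β` with `μ_{L_t}(Kᶜ) < ε` for all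
`t ≤ T`. Evaluations are continuous on `Φ'_β` (a nuclear `Φ` is locally convex), so `K` is
pointwise bounded, and since `Φ` is barrelled, `p(φ) = sup_{f ∈ K} |f φ|` is a continuous
seminorm. For `p(φ) < ε` the cylinder event `{|L_t φ| ≥ ε}` has `μ_{L_t}`-measure at most
`μ_{L_t}(Kᶜ) < ε`.
-/

open MeasureTheory ProbabilityTheory Complex Filter Set
open scoped ENNReal NNReal Topology

noncomputable section

variable {Φ : Type*} [AddCommGroup Φ] [Module ℝ Φ] [TopologicalSpace Φ]

/-- The projection `π_{φ₁,…,φₙ} : Φ' → ℝⁿ`, `f ↦ (f[φ₁],…,f[φₙ])`. -/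
def cylProj {Φ : Type*} [AddCommGroup Φ] [Module ℝ Φ] [TopologicalSpace Φ]
    {n : ℕ} (φ : Fin n → Φ) : (Φ →L[ℝ] ℝ) → (Fin n → ℝ) :=
  fun f i => f (φ i)

/-- The collection of cylindrical subsets of `Φ'` based on `M ⊆ Φ`. -/
def cylSets (M : Set Φ) : Set (Set (Φ →L[ℝ] ℝ)) :=
  {Z | ∃ (n : ℕ) (φ : Fin n → Φ), (∀ i, φ i ∈ M) ∧
    ∃ A : Set (Fin n → ℝ), MeasurableSet A ∧ Z = cylProj φ ⁻¹' A}

/-- A Radon measure: every Borel set can be inner approximated by compact sets. -/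
def IsRadon {X : Type*} [TopologicalSpace X] [MeasurableSpace X] (μ : Measure X) : Prop :=
  ∀ A : Set X, MeasurableSet A → ∀ ε : ℝ≥0∞, 0 < ε →
    ∃ K, K ⊆ A ∧ IsCompact K ∧ μ (A \ K) < ε

/-- Convolution of two measures. -/
def conv' {G : Type*} [Add G] [MeasurableSpace G] (μ ν : Measure G) : Measure G :=
  Measure.map (fun p : G × G => p.1 + p.2) (μ.prod ν)

/-- `n`-fold convolution power, with the convention `μ^{∗0} = δ₀`. -/
def convPow {G : Type*} [AddMonoid G] [MeasurableSpace G] (μ : Measure G) : ℕ → Measure G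
  | 0 => Measure.dirac 0
  | n + 1 => conv' (convPow μ n) μ

/-- A Hilbertian seminorm: induced by a symmetric nonnegative bilinear form. -/
def IsHilbertian (p : Seminorm ℝ Φ) : Prop :=
  ∃ B : Φ →ₗ[ℝ] Φ →ₗ[ℝ] ℝ, (∀ x y, B x y = B y x) ∧ (∀ x, 0 ≤ B x x) ∧
    ∀ x, p x = Real.sqrt (B x x)

/-- `e` is an orthonormal basis for the Hilbertian seminorm `q` with bilinear form `B`:
orthonormality together with density of the span in the `q`-topology. -/
def IsONBasisFor (q : Seminorm ℝ Φ) (B : Φ →ₗ[ℝ] Φ →ₗ[ℝ] ℝ) (e : ℕ → Φ) : Prop :=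
  (∀ x y, B x y = B y x) ∧ (∀ x, q x = Real.sqrt (B x x)) ∧
  (∀ i j, B (e i) (e j) = if i = j then 1 else 0) ∧
  ∀ φ : Φ, ∀ ε : ℝ, 0 < ε → ∃ c : ℕ →₀ ℝ, q (φ - c.sum fun i a => a • e i) < ε

/-- The canonical inclusion `i_{p,q} : Φ_q → Φ_p` (for `p ≤ q`) is Hilbert–Schmidt. -/
def IsHSPair (p q : Seminorm ℝ Φ) : Prop :=
  p ≤ q ∧ ∃ (B : Φ →ₗ[ℝ] Φ →ₗ[ℝ] ℝ) (e : ℕ → Φ),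
    IsONBasisFor q B e ∧ Summable (fun n => (p (e n)) ^ 2)

/-- Auxiliary: the topology of `Φ` is generated by the seminorm family `P`. -/
def GeneratesTopology {ι : Type} [Nonempty ι] (P : SeminormFamily ℝ Φ ι) : Prop :=
  WithSeminorms P

/-- A nuclear space: the topology is generated by a family of Hilbertian seminorms such that
each member is dominated by another member with Hilbert–Schmidt canonical inclusion. -/
class IsNuclearSpace (Φ : Type*) [AddCommGroup Φ] [Module ℝ Φ] [TopologicalSpace Φ] : Prop where
  out : ∃ (ι : Type) (hne : Nonempty ι) (P : SeminormFamily ℝ Φ ι),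
    @GeneratesTopology Φ _ _ _ ι hne P ∧
    (∀ i, IsHilbertian (P i)) ∧ ∀ i, ∃ j, IsHSPair (P i) (P j)

variable [MeasurableSpace (Φ →L[ℝ] ℝ)]

/-- Characteristic function of a measure on the dual. -/
def charFun' (μ : Measure (Φ →L[ℝ] ℝ)) (φ : Φ) : ℂ :=
  ∫ f, Complex.exp (Complex.I * (f φ : ℂ)) ∂μ

/-- Dual "norm" `p'(f) = sup {|f[φ]| : p(φ) ≤ 1}`, with values in `ℝ≥0∞`. -/
def dualNorm (p : Seminorm ℝ Φ) (f : Φ →L[ℝ] ℝ) : ℝ≥0∞ :=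
  ⨆ φ ∈ {ψ : Φ | p ψ ≤ 1}, ENNReal.ofReal |f φ|

/-- The unit ball `B_{p'}(1)` of the dual norm. -/
def dualBall (p : Seminorm ℝ Φ) : Set (Φ →L[ℝ] ℝ) :=
  {f | dualNorm p f ≤ 1}

/-- A `Φ'_β`-valued Lévy process: starts at `0` a.s., has independent and stationary
increments, Radon distributions, and distributions weakly continuous at `0`. -/
structure IsLevyProcess {Ω : Type*} [MeasurableSpace Ω]
    (P : Measure Ω) (L : ℝ → Ω → (Φ →L[ℝ] ℝ)) : Prop where
  measurable : ∀ t : ℝ, Measurable (L t)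
  init : ∀ᵐ ω ∂P, L 0 ω = 0
  indepIncrements : ∀ (n : ℕ) (t : Fin (n + 1) → ℝ), Monotone t → 0 ≤ t 0 →
    iIndepFun (fun i : Fin (n + 1) => fun ω =>
      if i = 0 then L (t 0) ω else L (t i) ω - L (t (i - 1)) ω) P
  stationary : ∀ s t : ℝ, 0 ≤ s → s ≤ t →
    P.map (fun ω => L t ω - L s ω) = P.map (L (t - s))
  radon : ∀ t : ℝ, 0 ≤ t → IsRadon (P.map (L t))
  weakCont : ∀ g : BoundedContinuousFunction (Φ →L[ℝ] ℝ) ℝ,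
    Tendsto (fun t => ∫ f, g f ∂(P.map (L t))) (nhdsWithin 0 (Set.Ici 0)) (nhds (g 0))

theorem IsNuclearSpace.continuousSMul (E : Type*) [AddCommGroup E] [Module ℝ E]
    [TopologicalSpace E] [IsNuclearSpace E] : ContinuousSMul ℝ E := by
  obtain ⟨_, _, p, hp, -, -⟩ := ‹IsNuclearSpace E›.out
  exact WithSeminorms.continuousSMul hp

theorem ContinuousLinearMap.exists_continuous_seminorm_bound_of_bddAbove
    {𝕜 E F : Type*} [NormedField 𝕜] [AddCommGroup E] [Module 𝕜 E] [TopologicalSpace E]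
    [BarrelledSpace 𝕜 E] [SeminormedAddCommGroup F] [NormedSpace 𝕜 F] {K : Set (E →L[𝕜] F)}
    (hK : ∀ x, BddAbove ((fun f : E →L[𝕜] F => ‖f x‖) '' K)) :
    ∃ p : Seminorm 𝕜 E, Continuous p ∧ ∀ f ∈ K, ∀ x, ‖f x‖ ≤ p x := by
  let q : K → Seminorm 𝕜 E := fun f => (normSeminorm 𝕜 F).comp (f : E →L[𝕜] F).toLinearMap
  have hq : BddAbove (range q) := by
    refine Seminorm.bddAbove_range_iff.2 fun x => (hK x).mono ?_
    rintro _ ⟨f, rfl⟩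
    exact ⟨f, f.2, rfl⟩
  refine ⟨⨆ f, q f, ?_, fun f hf x => ?_⟩
  · rw [Seminorm.coe_iSup_eq hq]
    exact Seminorm.continuous_iSup q (fun f => continuous_norm.comp (f : E →L[𝕜] F).continuous) hq
  · rw [Seminorm.iSup_apply hq]
    exact le_ciSup (Seminorm.bddAbove_range_iff.1 hq x) (⟨f, hf⟩ : K)

theorem IsCompact.bddAbove_image_norm_apply {𝕜 E F : Type*} [NontriviallyNormedField 𝕜]
    [AddCommGroup E] [Module 𝕜 E] [TopologicalSpace E] [ContinuousSMul 𝕜 E]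
    [SeminormedAddCommGroup F] [NormedSpace 𝕜 F] {K : Set (E →L[𝕜] F)} (hK : IsCompact K)
    (x : E) : BddAbove ((fun f : E →L[𝕜] F => ‖f x‖) '' K) :=
  hK.bddAbove_image (continuous_norm.comp (continuous_eval_const x)).continuousOn

theorem measure_setOf_apply_mem_eq_of_cylProj {Ω : Type*} [MeasurableSpace Ω] {P : Measure Ω}
    {X : Φ → Ω → ℝ} {ν : Measure (Φ →L[ℝ] ℝ)}
    (hν : ∀ (n : ℕ) (φ : Fin n → Φ) (A : Set (Fin n → ℝ)), MeasurableSet A →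
      ν (cylProj φ ⁻¹' A) = P {ω | (fun i => X (φ i) ω) ∈ A})
    (φ : Φ) {s : Set ℝ} (hs : MeasurableSet s) :
    ν {f | f φ ∈ s} = P {ω | X φ ω ∈ s} :=
  hν 1 (fun _ => φ) ((fun x => x 0) ⁻¹' s) (measurable_pi_apply 0 hs)

theorem statement3_general [BarrelledSpace ℝ Φ] [IsNuclearSpace Φ]
    {Ω : Type*} [MeasurableSpace Ω] (P : Measure Ω)
    (L : ℝ → Φ → Ω → ℝ)
    (μ : ℝ → Measure (Φ →L[ℝ] ℝ))
    (hext : ∀ t : ℝ, 0 ≤ t → IsProbabilityMeasure (μ t) ∧ IsRadon (μ t) ∧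
      ∀ (n : ℕ) (φ : Fin n → Φ) (A : Set (Fin n → ℝ)), MeasurableSet A →
        μ t (cylProj φ ⁻¹' A) = P {ω | (fun i => L t (φ i) ω) ∈ A})
    (htight : ∀ T : ℝ, 0 < T → ∀ ε : ℝ≥0∞, 0 < ε →
      ∃ K : Set (Φ →L[ℝ] ℝ), IsCompact K ∧ ∀ t ∈ Set.Icc (0:ℝ) T, μ t Kᶜ < ε) :
    ∀ T : ℝ, 0 < T → ∀ ε : ℝ, 0 < ε → ∃ U ∈ 𝓝 (0 : Φ), ∀ φ ∈ U,
      ∀ t ∈ Set.Icc (0:ℝ) T, P {ω | ε ≤ |L t φ ω|} < ENNReal.ofReal ε := by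
  have := IsNuclearSpace.continuousSMul Φ
  intro T hT ε hε
  obtain ⟨K, hKc, hKμ⟩ := htight T hT (ENNReal.ofReal ε) (ENNReal.ofReal_pos.2 hε)
  obtain ⟨p, hpc, hKp⟩ :=
    ContinuousLinearMap.exists_continuous_seminorm_bound_of_bddAbove hKc.bddAbove_image_norm_apply
  refine ⟨{φ | p φ < ε}, (isOpen_lt hpc continuous_const).mem_nhds (by simpa using hε), ?_⟩
  intro φ hφ t ht
  have hsub : {f : Φ →L[ℝ] ℝ | ε ≤ |f φ|} ⊆ Kᶜ := fun f hf hfK =>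
    (hf.trans (hKp f hfK φ)).not_gt hφ
  calc P {ω | ε ≤ |L t φ ω|}
      = μ t {f | ε ≤ |f φ|} :=
        (measure_setOf_apply_mem_eq_of_cylProj (hext t ht.1).2.2 φ
          (measurableSet_Ici.preimage measurable_abs)).symm
    _ ≤ μ t Kᶜ := measure_mono hsub
    _ < ENNReal.ofReal ε := hKμ t ht

/-- if the cylindrical distributions of a cylindrical process on the dual of a
barrelled nuclear space extend to Radon probability measures that are uniformly tight on
compact time intervals, the family `{L_t : t ∈ [0,T]}` of linear maps `Φ → L⁰(Ω,F,P)` is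
equicontinuous (at zero, in the topology of convergence in probability). -/
theorem statement3 [BarrelledSpace ℝ Φ] [IsNuclearSpace Φ] [BorelSpace (Φ →L[ℝ] ℝ)]
    {Ω : Type*} [MeasurableSpace Ω] (P : Measure Ω) [IsProbabilityMeasure P]
    (L : ℝ → Φ → Ω → ℝ)
    (hmeas : ∀ (t : ℝ) (φ : Φ), Measurable (L t φ))
    (hadd : ∀ (t : ℝ) (φ ψ : Φ), ∀ᵐ ω ∂P, L t (φ + ψ) ω = L t φ ω + L t ψ ω)
    (hsmul : ∀ (t : ℝ) (a : ℝ) (φ : Φ), ∀ᵐ ω ∂P, L t (a • φ) ω = a * L t φ ω)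
    (μ : ℝ → Measure (Φ →L[ℝ] ℝ))
    (hext : ∀ t : ℝ, 0 ≤ t → IsProbabilityMeasure (μ t) ∧ IsRadon (μ t) ∧
      ∀ (n : ℕ) (φ : Fin n → Φ) (A : Set (Fin n → ℝ)), MeasurableSet A →
        μ t (cylProj φ ⁻¹' A) = P {ω | (fun i => L t (φ i) ω) ∈ A})
    (htight : ∀ T : ℝ, 0 < T → ∀ ε : ℝ≥0∞, 0 < ε →
      ∃ K : Set (Φ →L[ℝ] ℝ), IsCompact K ∧ ∀ t ∈ Set.Icc (0:ℝ) T, μ t Kᶜ < ε) :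
    ∀ T : ℝ, 0 < T → ∀ ε : ℝ, 0 < ε → ∃ U ∈ 𝓝 (0 : Φ), ∀ φ ∈ U,
      ∀ t ∈ Set.Icc (0:ℝ) T, P {ω | ε ≤ |L t φ ω|} < ENNReal.ofReal ε :=
  statement3_general P L μ hext htight
end
end

section
/- (Fernique-type estimate) Let μ be an infinitely divisible Radon probability measure on Φ'_β, p a continuous Hilbertian semi-norm on Φ, and ε ∈ (0, 1/4] such that |1 − μ̂(φ)| < ε whenever p(φ) ≤ 1. Then for every φ ∈ Φ and every n ∈ ℕ, n·(1 − Re μ̂^{1/n}(φ)) ≤ 8ε(1 + p(φ)²), where μ̂^{1/n} denotes the characteristic function of an n-th convolution root of μ. -/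
open MeasureTheory ProbabilityTheory Complex Filter Set
open scoped ENNReal NNReal Topology

noncomputable section

variable {Φ : Type*} [AddCommGroup Φ] [Module ℝ Φ] [TopologicalSpace Φ]

variable [MeasurableSpace (Φ →L[ℝ] ℝ)]

/-!
An `n`-th convolution root `ν` of `μ` satisfies `ν̂ = μ̂^{1/n}`, and on the unit ball of `p`
this root is the principal one: along the segment `t ↦ tψ` the values `μ̂(tψ)` stay in the
disc `|1 - z| < 1/4`, so `ν̂(tψ)` and `exp(log μ̂(tψ) / n)` differ by a continuous family of
`n`-th roots of unity equal to `1` at `t = 0`. Writing `log μ̂(ψ) = a + ib` with `a ≤ 0` gives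
`n (1 - Re ν̂(ψ)) ≤ -a + b²/2 ≤ 2ε`. Outside the ball, `1 - cos (m x) ≤ m² (1 - cos x)` transfers
the bound from `φ / m` to `φ` at the cost of the factor `m² ≤ 2 (1 + p(φ)²)`.
-/

namespace Real

theorem abs_sin_nat_mul_le (x : ℝ) (m : ℕ) : |sin (m * x)| ≤ m * |sin x| := by
  induction m with
  | zero => simp
  | succ m ih =>
    calc |sin ((m + 1 : ℕ) * x)| = |sin (m * x) * cos x + cos (m * x) * sin x| := by
          push_cast; rw [add_mul, one_mul, sin_add]
      _ ≤ |sin (m * x)| * |cos x| + |cos (m * x)| * |sin x| := by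
          rw [← abs_mul, ← abs_mul]; exact abs_add_le _ _
      _ ≤ m * |sin x| * 1 + 1 * |sin x| := by
          gcongr
          exacts [abs_cos_le_one x, abs_cos_le_one _]
      _ = (m + 1 : ℕ) * |sin x| := by push_cast; ring

theorem one_sub_cos_nat_mul_le (x : ℝ) (m : ℕ) :
    1 - cos (m * x) ≤ (m : ℝ) ^ 2 * (1 - cos x) := by
  have half (y : ℝ) : 1 - cos y = 2 * sin (y / 2) ^ 2 := by
    have := cos_sq_add_sin_sq (y / 2)
    rw [show y = 2 * (y / 2) by ring, cos_two_mul, mul_div_cancel_left₀ _ two_ne_zero]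
    linarith
  have hsin : sin (m * (x / 2)) ^ 2 ≤ (m * sin (x / 2)) ^ 2 := by
    rw [← sq_abs, ← sq_abs (_ * _), abs_mul, Nat.abs_cast]
    exact pow_le_pow_left₀ (abs_nonneg _) (abs_sin_nat_mul_le _ m) 2
  rw [half, half, mul_div_assoc]
  nlinarith

end Real

namespace Complex

theorem one_sub_re_exp_le {z : ℂ} (hz : z.re ≤ 0) : 1 - (exp z).re ≤ -z.re + z.im ^ 2 / 2 := by
  rw [exp_re]
  have hcos := Real.one_sub_sq_div_two_le_cos (x := z.im)
  have hexp := Real.add_one_le_exp z.re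
  have hexp_le : Real.exp z.re ≤ 1 := Real.exp_le_one_iff.2 hz
  nlinarith [mul_nonneg (sub_nonneg.2 (Real.cos_le_one z.im)) (sub_nonneg.2 hexp_le)]

theorem nat_mul_one_sub_re_exp_div_le {z : ℂ} (hz : z.re ≤ 0) {n : ℕ} (hn : n ≠ 0) :
    n * (1 - (exp (z / n)).re) ≤ ‖z‖ + ‖z‖ ^ 2 / 2 := by
  have hn1 : (1 : ℝ) ≤ n := Nat.one_le_cast.2 (Nat.one_le_iff_ne_zero.2 hn)
  have h := one_sub_re_exp_le (z := z / n) (by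
    rw [div_natCast_re]; exact div_nonpos_of_nonpos_of_nonneg hz (by positivity))
  rw [div_natCast_re, div_natCast_im] at h
  have hre : -z.re ≤ ‖z‖ := by linarith [(abs_le.1 (abs_re_le_norm z)).1]
  have him : z.im ^ 2 ≤ ‖z‖ ^ 2 := by
    rw [← sq_abs]; exact pow_le_pow_left₀ (abs_nonneg _) (abs_im_le_norm z) 2
  calc n * (1 - (exp (z / n)).re) ≤ n * (-(z.re / n) + (z.im / n) ^ 2 / 2) := by gcongr
    _ = -z.re + z.im ^ 2 / 2 / n := by field_simp
    _ ≤ ‖z‖ + ‖z‖ ^ 2 / 2 := by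
      have : z.im ^ 2 / 2 / n ≤ z.im ^ 2 / 2 := div_le_self (by positivity) hn1
      linarith

theorem norm_log_le_of_norm_one_sub_lt {w : ℂ} {δ : ℝ} (hδ : δ ≤ 1 / 4) (hw : ‖1 - w‖ < δ) :
    ‖log w‖ ≤ 7 / 6 * δ := by
  have hr : ‖w - 1‖ < δ := by rwa [norm_sub_rev]
  set r := ‖w - 1‖
  have hr0 : 0 ≤ r := norm_nonneg _
  have h := norm_log_one_add_le (z := w - 1) (by linarith)
  rw [add_sub_cancel] at h
  have hinv : (1 - r)⁻¹ ≤ 4 / 3 := by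
    rw [inv_le_comm₀ (by linarith) (by norm_num)]; linarith
  nlinarith [mul_le_mul_of_nonneg_left hinv (sq_nonneg r)]

theorem nat_mul_one_sub_re_exp_log_div_le {w : ℂ} {ε : ℝ} (hε : ε ≤ 1 / 4) (hw : ‖w‖ ≤ 1)
    (hwε : ‖1 - w‖ < ε) {n : ℕ} (hn : n ≠ 0) :
    n * (1 - (exp (log w / n)).re) ≤ 2 * ε := by
  have hre : (log w).re ≤ 0 := by
    rw [log_re]; exact Real.log_nonpos (norm_nonneg w) hw
  have hlog := norm_log_le_of_norm_one_sub_lt hε hwε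
  have hε0 : 0 < ε := (norm_nonneg _).trans_lt hwε
  calc n * (1 - (exp (log w / n)).re) ≤ ‖log w‖ + ‖log w‖ ^ 2 / 2 :=
        nat_mul_one_sub_re_exp_div_le hre hn
    _ ≤ 7 / 6 * ε + (7 / 6 * ε) ^ 2 / 2 := by gcongr
    _ ≤ 2 * ε := by nlinarith

theorem eq_exp_log_pow_div_of_isPreconnected {X : Type*} [TopologicalSpace X] {S : Set X}
    (hS : IsPreconnected S) {g : X → ℂ} (hg : ContinuousOn g S) {x₀ : X} (hx₀ : x₀ ∈ S)
    (hg₀ : g x₀ = 1) {n : ℕ} (hn : n ≠ 0) (hslit : ∀ x ∈ S, g x ^ n ∈ slitPlane)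
    {x : X} (hx : x ∈ S) : g x = exp (log (g x ^ n) / n) := by
  set ρ : X → ℂ := fun x => exp (log (g x ^ n) / n)
  have hne : ∀ x ∈ S, g x ^ n ≠ 0 := fun x hx => slitPlane_ne_zero (hslit x hx)
  have hρ : ContinuousOn ρ S :=
    continuous_exp.comp_continuousOn (((hg.pow n).clog hslit).div_const _)
  have hρ_pow : ∀ x ∈ S, (g x / ρ x) ^ n = 1 := fun x hx => by
    rw [div_pow, ← exp_nat_mul, mul_div_cancel₀ _ (Nat.cast_ne_zero.2 hn), exp_log (hne x hx),
      div_self (hne x hx)]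
  have hroots : {z : ℂ | z ^ n = 1}.Finite :=
    (Polynomial.nthRootsFinset n (1 : ℂ)).finite_toSet.subset fun z hz => by
      rwa [Finset.mem_coe, Polynomial.mem_nthRootsFinset (Nat.pos_of_ne_zero hn)]
  have hconst := hS.constant_of_mapsTo hroots.isDiscrete
    (hg.div hρ fun x _ => exp_ne_zero _) hρ_pow hx hx₀
  have hρ₀ : ρ x₀ = 1 := by simp [ρ, hg₀]
  rw [Pi.div_apply, Pi.div_apply, hg₀, hρ₀, div_one, div_eq_one_iff_eq (exp_ne_zero _)] at hconst
  exact hconst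

end Complex

open Complex

section CharFun

variable (ν : Measure (Φ →L[ℝ] ℝ))

theorem charFun'_zero [IsProbabilityMeasure ν] : charFun' ν (0 : Φ) = 1 := by
  simp [charFun']

theorem norm_charFun'_le_one [IsProbabilityMeasure ν] (φ : Φ) : ‖charFun' ν φ‖ ≤ 1 := by
  simpa [charFun'] using norm_integral_le_of_norm_le_const (μ := ν) (C := 1)
    (ae_of_all _ fun f => (norm_exp_I_mul_ofReal (f φ)).le)

variable [ContinuousSMul ℝ Φ]

omit [MeasurableSpace (Φ →L[ℝ] ℝ)] in
theorem continuous_exp_I_mul_apply (φ : Φ) :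
    Continuous fun f : Φ →L[ℝ] ℝ => exp (I * f φ) := by
  fun_prop

variable [BorelSpace (Φ →L[ℝ] ℝ)]

section FiniteMeasure

variable [IsFiniteMeasure ν]

theorem charFun'_conv' (μ : Measure (Φ →L[ℝ] ℝ)) [IsFiniteMeasure μ]
    (hadd : AEMeasurable (fun q : (Φ →L[ℝ] ℝ) × (Φ →L[ℝ] ℝ) => q.1 + q.2) (μ.prod ν))
    (φ : Φ) : charFun' (conv' μ ν) φ = charFun' μ φ * charFun' ν φ := by
  rw [charFun', conv', integral_map hadd (continuous_exp_I_mul_apply φ).aestronglyMeasurable]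
  simp_rw [add_apply, ofReal_add, mul_add, exp_add]
  exact integral_prod_mul (fun f : Φ →L[ℝ] ℝ => exp (I * f φ))
    (fun f : Φ →L[ℝ] ℝ => exp (I * f φ))

omit [ContinuousSMul ℝ Φ] [BorelSpace (Φ →L[ℝ] ℝ)] in
instance isFiniteMeasure_convPow (k : ℕ) : IsFiniteMeasure (convPow ν k) := by
  induction k with
  | zero => rw [convPow]; infer_instance
  | succ k ih => rw [convPow, conv']; infer_instance

/-- Without second countability addition on the dual need not be measurable, and then the
convolution is the zero measure; a nonzero convolution power excludes this at every stage. -/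
theorem charFun'_convPow {k : ℕ} (hk : convPow ν k ≠ 0) (φ : Φ) :
    charFun' (convPow ν k) φ = charFun' ν φ ^ k := by
  induction k with
  | zero =>
    rw [convPow, charFun', integral_dirac' _ _ (continuous_exp_I_mul_apply φ).stronglyMeasurable]
    simp
  | succ k ih =>
    rw [convPow] at hk ⊢
    have hadd : AEMeasurable (fun q : (Φ →L[ℝ] ℝ) × (Φ →L[ℝ] ℝ) => q.1 + q.2)
        ((convPow ν k).prod ν) := by
      by_contra h
      exact hk (Measure.map_of_not_aemeasurable h)
    have hk' : convPow ν k ≠ 0 := by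
      rintro h
      exact hk (by rw [conv', h, Measure.zero_prod, Measure.map_zero])
    rw [charFun'_conv' ν _ hadd, ih hk', pow_succ]

theorem continuous_charFun'_smul (ψ : Φ) : Continuous fun t : ℝ => charFun' ν (t • ψ) := by
  simp_rw [charFun', map_smul, smul_eq_mul]
  refine continuous_of_dominated (fun t => ?_) (fun t => ?_)
    (integrable_const (1 : ℝ)) (ae_of_all _ fun f => by fun_prop)
  · exact Continuous.aestronglyMeasurable (by fun_prop)
  · exact ae_of_all _ fun f => (norm_exp_I_mul_ofReal _).le

end FiniteMeasure

section ProbabilityMeasure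

variable [IsProbabilityMeasure ν]

theorem one_sub_re_charFun' (φ : Φ) :
    1 - (charFun' ν φ).re = ∫ f, (1 - Real.cos (f φ)) ∂ν := by
  have hint : Integrable (fun f : Φ →L[ℝ] ℝ => exp (I * f φ)) ν :=
    Integrable.of_bound (continuous_exp_I_mul_apply φ).aestronglyMeasurable 1
      (ae_of_all _ fun f => (norm_exp_I_mul_ofReal _).le)
  have hcos : ∀ f : Φ →L[ℝ] ℝ, (exp (I * f φ)).re = Real.cos (f φ) := fun f => by
    rw [mul_comm, exp_ofReal_mul_I_re]
  rw [integral_sub (integrable_const 1) (by simpa [hcos] using hint.re), charFun',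
    ← reCLM_apply, ← reCLM.integral_comp_comm hint]
  simp [hcos]

theorem one_sub_re_charFun'_nat_smul_le (ψ : Φ) (m : ℕ) :
    1 - (charFun' ν ((m : ℝ) • ψ)).re ≤ (m : ℝ) ^ 2 * (1 - (charFun' ν ψ).re) := by
  have hint (c : ℝ) : Integrable (fun f : Φ →L[ℝ] ℝ => 1 - Real.cos (c * f ψ)) ν :=
    Integrable.of_bound (Continuous.aestronglyMeasurable (by fun_prop)) 2
      (ae_of_all _ fun f => by
        rw [Real.norm_eq_abs, abs_le]
        constructor <;> linarith [Real.neg_one_le_cos (c * f ψ), Real.cos_le_one (c * f ψ)])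
  rw [one_sub_re_charFun', one_sub_re_charFun', ← integral_const_mul]
  simp_rw [map_smul, smul_eq_mul]
  refine integral_mono (hint m) ((by simpa using hint 1 : Integrable _ ν).const_mul _) fun f => ?_
  exact Real.one_sub_cos_nat_mul_le (f ψ) m

theorem one_sub_re_charFun'_le_of_unit_ball (p : Seminorm ℝ Φ) {C : ℝ}
    (hC : ∀ ψ, p ψ ≤ 1 → 1 - (charFun' ν ψ).re ≤ C) (φ : Φ) :
    1 - (charFun' ν φ).re ≤ 2 * (1 + p φ ^ 2) * C := by
  have hC0 : 0 ≤ C := by simpa [charFun'_zero] using hC 0 (by simp)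
  set m : ℕ := ⌊p φ⌋₊ + 1
  have hm0 : (0 : ℝ) < m := by positivity
  have hm_lt : p φ < m := by
    simp only [m, Nat.cast_add, Nat.cast_one]; exact Nat.lt_floor_add_one _
  have hm_le : (m : ℝ) ≤ p φ + 1 := by
    simp only [m, Nat.cast_add, Nat.cast_one]; linarith [Nat.floor_le (apply_nonneg p φ)]
  have hψ : p ((m : ℝ)⁻¹ • φ) ≤ 1 := by
    rw [map_smul_eq_mul, norm_inv, Real.norm_of_nonneg hm0.le, inv_mul_le_one₀ hm0]
    exact hm_lt.le
  have hscale := one_sub_re_charFun'_nat_smul_le ν ((m : ℝ)⁻¹ • φ) m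
  rw [smul_inv_smul₀ hm0.ne'] at hscale
  have hm_sq : (m : ℝ) ^ 2 ≤ 2 * (1 + p φ ^ 2) := by nlinarith [sq_nonneg (p φ - 1)]
  calc 1 - (charFun' ν φ).re ≤ (m : ℝ) ^ 2 * C :=
        hscale.trans (mul_le_mul_of_nonneg_left (hC _ hψ) (by positivity))
    _ ≤ 2 * (1 + p φ ^ 2) * C := mul_le_mul_of_nonneg_right hm_sq hC0

theorem nat_mul_one_sub_re_charFun'_le_of_pow_eq
    (μ : Measure (Φ →L[ℝ] ℝ)) [IsProbabilityMeasure μ] {n : ℕ} (hn : n ≠ 0)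
    (hpow : ∀ φ, charFun' μ φ = charFun' ν φ ^ n) (p : Seminorm ℝ Φ) {ε : ℝ} (hε : ε ≤ 1 / 4)
    (hsmall : ∀ φ : Φ, p φ ≤ 1 → ‖1 - charFun' μ φ‖ < ε) {ψ : Φ} (hψ : p ψ ≤ 1) :
    n * (1 - (charFun' ν ψ).re) ≤ 2 * ε := by
  have hseg : ∀ t ∈ Icc (0 : ℝ) 1, p (t • ψ) ≤ 1 := fun t ht => by
    rw [map_smul_eq_mul, Real.norm_of_nonneg ht.1]
    exact mul_le_one₀ ht.2 (apply_nonneg p ψ) hψ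
  have hslit : ∀ t ∈ Icc (0 : ℝ) 1, charFun' ν (t • ψ) ^ n ∈ slitPlane := fun t ht => by
    have h := mem_slitPlane_of_norm_lt_one (z := charFun' μ (t • ψ) - 1) (by
      rw [norm_sub_rev]; exact (hsmall _ (hseg t ht)).trans_le (hε.trans (by norm_num)))
    rwa [add_sub_cancel, hpow] at h
  have hroot := eq_exp_log_pow_div_of_isPreconnected isPreconnected_Icc
    (continuous_charFun'_smul ν ψ).continuousOn (left_mem_Icc.2 zero_le_one)
    (by rw [zero_smul, charFun'_zero]) hn hslit (right_mem_Icc.2 zero_le_one)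
  rw [one_smul, ← hpow] at hroot
  rw [hroot]
  exact nat_mul_one_sub_re_exp_log_div_le hε (norm_charFun'_le_one μ ψ) (hsmall ψ hψ) hn

end ProbabilityMeasure

end CharFun

theorem statement12_general [IsNuclearSpace Φ] [BorelSpace (Φ →L[ℝ] ℝ)]
    (μ : Measure (Φ →L[ℝ] ℝ)) [IsProbabilityMeasure μ]
    (p : Seminorm ℝ Φ)
    (ε : ℝ) (hε0 : 0 < ε) (hε4 : ε ≤ 1 / 4)
    (hsmall : ∀ φ : Φ, p φ ≤ 1 → ‖1 - charFun' μ φ‖ < ε) :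
    ∀ n : ℕ, 0 < n → ∀ ν : Measure (Φ →L[ℝ] ℝ),
      IsProbabilityMeasure ν → IsRadon ν → convPow ν n = μ →
      ∀ φ : Φ, (n : ℝ) * (1 - (charFun' ν φ).re) ≤ 8 * ε * (1 + (p φ) ^ 2) := by
  obtain ⟨_, _, _, hP, -, -⟩ := ‹IsNuclearSpace Φ›.out
  have : ContinuousSMul ℝ Φ := WithSeminorms.continuousSMul hP
  intro n hn ν _ _ hconv φ
  have hpow : ∀ χ, charFun' μ χ = charFun' ν χ ^ n := fun χ => by
    subst hconv; exact charFun'_convPow ν (IsProbabilityMeasure.ne_zero _) χ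
  have hn0 : (0 : ℝ) < n := Nat.cast_pos.2 hn
  have hball : ∀ ψ, p ψ ≤ 1 → 1 - (charFun' ν ψ).re ≤ 2 * ε / n := fun ψ hψ => by
    rw [le_div_iff₀' hn0]
    exact nat_mul_one_sub_re_charFun'_le_of_pow_eq ν μ hn.ne' hpow p hε4 hsmall hψ
  calc (n : ℝ) * (1 - (charFun' ν φ).re)
      ≤ n * (2 * (1 + p φ ^ 2) * (2 * ε / n)) :=
        mul_le_mul_of_nonneg_left (one_sub_re_charFun'_le_of_unit_ball ν p hball φ) hn0.le
    _ = 4 * ε * (1 + p φ ^ 2) := by field_simp; ring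
    _ ≤ 8 * ε * (1 + p φ ^ 2) := by nlinarith [sq_nonneg (p φ)]

/-- Fernique-type estimate: if `μ` is infinitely divisible and
`|1 − μ̂(φ)| < ε` on the unit ball of `p` (with `0 < ε ≤ 1/4`), then for every `n`-th
convolution root `ν` of `μ`, `n·(1 − Re ν̂(φ)) ≤ 8ε(1 + p(φ)²)`. -/
theorem statement12 [IsNuclearSpace Φ] [BorelSpace (Φ →L[ℝ] ℝ)]
    (μ : Measure (Φ →L[ℝ] ℝ)) [IsProbabilityMeasure μ] (hrad : IsRadon μ)
    (hID : ∀ n : ℕ, 0 < n → ∃ ν : Measure (Φ →L[ℝ] ℝ),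
      IsProbabilityMeasure ν ∧ IsRadon ν ∧ convPow ν n = μ)
    (p : Seminorm ℝ Φ) (hpc : Continuous ⇑p) (hpH : IsHilbertian p)
    (ε : ℝ) (hε0 : 0 < ε) (hε4 : ε ≤ 1 / 4)
    (hsmall : ∀ φ : Φ, p φ ≤ 1 → ‖1 - charFun' μ φ‖ < ε) :
    ∀ n : ℕ, 0 < n → ∀ ν : Measure (Φ →L[ℝ] ℝ),
      IsProbabilityMeasure ν → IsRadon ν → convPow ν n = μ →
      ∀ φ : Φ, (n : ℝ) * (1 - (charFun' ν φ).re) ≤ 8 * ε * (1 + (p φ) ^ 2) :=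
  statement12_general μ p ε hε0 hε4 hsmall
end
end
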